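/- In a right-angled Artin group (more generally, in any group satisfying the largeness alternative), any two elements either commute or freely generate a nonabelian free group of rank 2; consequently, such groups lie in the class L^Free_1 with law w = [a,b]: every finitely generated subgroup either satisfies the commutator law (is abelian) or contains a 1-short free subgroup. -/

import Mathlib

/-!
Finitely generated residually finite groups are Hopfian: a surjective endomorphism `φ` permutes
the finitely many homomorphisms to a finite quotient by precomposition, so every such quotient
map factors through `φ` and kills `ker φ`. The free group of rank two is residually finite,
because the Sanov matrices `!![1, 2; 0, 1]` and `!![1, 0; 2, 1]` play ping-pong on `ℤ² ∖ 0` and so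
embed it into `SL(2, ℤ)`, which is residually finite by reduction modulo integers.

Now let `a, b` generate `H`. If `H` surjects onto `F₂`, composing with `F₂ ↠ H` gives a surjective
endomorphism of `F₂`; it is injective, hence so is `F₂ → H`, i.e. `a, b` are a free basis.
If `H` is free abelian, `a` and `b` commute. For a finite set `S`, either its elements commute
pairwise, and then `⟨S⟩` is abelian, or two non-commuting letters of `S` generate a free group.
-/

/-- `g` can be written as a word of length at most `N` in `S ∪ S⁻¹`. -/
def ShortWord {G : Type*} [Group G] (S : Set G) (N : ℕ) (g : G) : Prop :=
  ∃ l : List G, (∀ x ∈ l, x ∈ S ∨ x⁻¹ ∈ S) ∧ l.length ≤ N ∧ l.prod = g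

open scoped MatrixGroups

theorem Group.ResiduallyFinite.of_injective {G H : Type*} [Group G] [Group H]
    [ResiduallyFinite H] {f : G →* H} (hf : Function.Injective f) : ResiduallyFinite G := by
  refine residuallyFinite_of_forall_exists_finite_monoidHom fun g hg => ?_
  obtain ⟨N, hN⟩ := exists_finiteIndexNormalSubgroup_notMem (f g) ((map_ne_one_iff f hf).mpr hg)
  exact ⟨_, inferInstance, inferInstance, (QuotientGroup.mk' N.toSubgroup).comp f,
    fun h => hN ((QuotientGroup.eq_one_iff _).mp h)⟩

instance MonoidHom.finite_of_group_fg (G Q : Type*) [Group G] [Group.FG G] [Group Q]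
    [Finite Q] : Finite (G →* Q) := by
  obtain ⟨S, hS⟩ := Group.fg_def.mp ‹_›
  exact Finite.of_injective (fun f : G →* Q => fun s : S => f s)
    fun f g hfg => MonoidHom.eq_of_eqOn_dense hS fun s hs => congrFun hfg ⟨s, hs⟩

theorem Group.ResiduallyFinite.injective_of_surjective {G : Type*} [Group G] [Group.FG G]
    [ResiduallyFinite G] {φ : G →* G} (hφ : Function.Surjective φ) : Function.Injective φ := by
  refine (injective_iff_map_eq_one φ).mpr fun w hw => ?_
  by_contra hw1
  obtain ⟨N, hwN⟩ := exists_finiteIndexNormalSubgroup_notMem w hw1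
  have hcomp : Function.Injective fun ψ : G →* G ⧸ N.toSubgroup => ψ.comp φ :=
    fun ψ₁ ψ₂ h => (MonoidHom.cancel_right hφ).mp h
  obtain ⟨ψ, hψ⟩ := Finite.injective_iff_surjective.mp hcomp (QuotientGroup.mk' N.toSubgroup)
  apply hwN
  change w ∈ N.toSubgroup
  rw [← QuotientGroup.eq_one_iff, ← QuotientGroup.mk'_apply, ← hψ]
  simp [hw]

instance Matrix.SpecialLinearGroup.residuallyFinite_int (n : Type*) [Fintype n]
    [DecidableEq n] : Group.ResiduallyFinite (SpecialLinearGroup n ℤ) := by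
  refine Group.residuallyFinite_of_forall_exists_finite_monoidHom fun M hM => ?_
  obtain ⟨i, j, hij⟩ : ∃ i j, M i j ≠ (1 : Matrix n n ℤ) i j := by
    by_contra! h
    exact hM (Subtype.ext (Matrix.ext h))
  set m := (M i j - (1 : Matrix n n ℤ) i j).natAbs + 1
  refine ⟨SpecialLinearGroup n (ZMod m), inferInstance, inferInstance,
    map (Int.castRingHom (ZMod m)), fun h => hij (sub_eq_zero.mp ?_)⟩
  have hdvd : (m : ℤ) ∣ M i j - (1 : Matrix n n ℤ) i j := by
    rw [← ZMod.intCast_zmod_eq_zero_iff_dvd, Int.cast_sub, sub_eq_zero]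
    simpa [Matrix.one_apply, apply_ite] using
      congrArg (fun N : SpecialLinearGroup n (ZMod m) => N i j) h
  exact Int.eq_zero_of_dvd_of_natAbs_lt_natAbs hdvd (by rw [Int.natAbs_natCast]; omega)

def SubMulAction.nonzero (G M : Type*) [Group G] [AddMonoid M] [DistribMulAction G M] :
    SubMulAction G M where
  carrier := {v | v ≠ 0}
  smul_mem' g _ hv := (smul_ne_zero_iff_ne g).mpr hv

theorem Matrix.SpecialLinearGroup.transvection_smul {ι F : Type*} [DecidableEq ι] [Fintype ι]
    [CommRing F] {i j : ι} (hij : i ≠ j) (b : F) (v : ι → F) :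
    transvection hij b • v = v + Pi.single i (b * v j) := by
  rw [Matrix.SpecialLinearGroup.smul_def, transvection_coe, smul_eq_mulVec, add_mulVec,
    one_mulVec, single_mulVec]
  rfl

namespace Sanov

open Matrix.SpecialLinearGroup

lemma pingPong_a (x y : ℤ) (hne : ¬(x = 0 ∧ y = 0)) (h : ¬(x * y < 0 ∧ |y| ≤ |x|)) :
    0 ≤ (x + 2 * y) * y ∧ |y| < |x + 2 * y| := by
  have h0 : 1 ≤ |x| + |y| := by grind
  rcases not_and_or.mp h with h | h <;> push Not at h <;>
  rcases abs_cases x with ⟨hx1, hx2⟩ | ⟨hx1, hx2⟩ <;>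
  rcases abs_cases y with ⟨hy1, hy2⟩ | ⟨hy1, hy2⟩ <;>
  rcases abs_cases (x + 2 * y) with ⟨hz1, hz2⟩ | ⟨hz1, hz2⟩ <;>
  simp only [hx1, hy1, hz1] at h h0 ⊢ <;>
  constructor <;> nlinarith [sq_nonneg x, sq_nonneg y]

lemma pingPong_a_inv (x y : ℤ) (hne : ¬(x = 0 ∧ y = 0)) (h : ¬(0 ≤ x * y ∧ |y| < |x|)) :
    (x - 2 * y) * y < 0 ∧ |y| ≤ |x - 2 * y| := by
  have h0 : 1 ≤ |x| + |y| := by grind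
  rcases not_and_or.mp h with h | h <;> push Not at h <;>
  rcases abs_cases x with ⟨hx1, hx2⟩ | ⟨hx1, hx2⟩ <;>
  rcases abs_cases y with ⟨hy1, hy2⟩ | ⟨hy1, hy2⟩ <;>
  rcases abs_cases (x - 2 * y) with ⟨hz1, hz2⟩ | ⟨hz1, hz2⟩ <;>
  simp only [hx1, hy1, hz1] at h h0 ⊢ <;>
  constructor <;> nlinarith [sq_nonneg x, sq_nonneg y]

lemma pingPong_b (x y : ℤ) (h : ¬(x * y < 0 ∧ |x| < |y|)) :
    0 ≤ x * (y + 2 * x) ∧ |x| ≤ |y + 2 * x| := by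
  rcases not_and_or.mp h with h | h <;> push Not at h <;>
  rcases abs_cases x with ⟨hx1, hx2⟩ | ⟨hx1, hx2⟩ <;>
  rcases abs_cases y with ⟨hy1, hy2⟩ | ⟨hy1, hy2⟩ <;>
  rcases abs_cases (y + 2 * x) with ⟨hz1, hz2⟩ | ⟨hz1, hz2⟩ <;>
  simp only [hx1, hy1, hz1] at h ⊢ <;>
  constructor <;> nlinarith [sq_nonneg x, sq_nonneg y]

lemma pingPong_b_inv (x y : ℤ) (h : ¬(0 ≤ x * y ∧ |x| ≤ |y|)) :
    x * (y - 2 * x) < 0 ∧ |x| < |y - 2 * x| := by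
  rcases not_and_or.mp h with h | h <;> push Not at h <;>
  rcases abs_cases x with ⟨hx1, hx2⟩ | ⟨hx1, hx2⟩ <;>
  rcases abs_cases y with ⟨hy1, hy2⟩ | ⟨hy1, hy2⟩ <;>
  rcases abs_cases (y - 2 * x) with ⟨hz1, hz2⟩ | ⟨hz1, hz2⟩ <;>
  simp only [hx1, hy1, hz1] at h ⊢ <;>
  constructor <;> nlinarith [sq_nonneg x, sq_nonneg y]

def a : SL(2, ℤ) := transvection (i := 0) (j := 1) (by decide) 2
def b : SL(2, ℤ) := transvection (i := 1) (j := 0) (by decide) 2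

/- The four ping-pong sets partition `ℤ² ∖ 0` according to the sign of `xy` and to which
coordinate dominates; the boundary cases are split so that `a^{±1}` and `b^{±1}` map the
complement of `Y i`, resp. `X i`, into `X i`, resp. `Y i`. -/
def X : Fin 2 → Set (Fin 2 → ℤ) :=
  ![{v | 0 ≤ v 0 * v 1 ∧ |v 1| < |v 0|}, {v | 0 ≤ v 0 * v 1 ∧ |v 0| ≤ |v 1|}]
def Y : Fin 2 → Set (Fin 2 → ℤ) :=
  ![{v | v 0 * v 1 < 0 ∧ |v 1| ≤ |v 0|}, {v | v 0 * v 1 < 0 ∧ |v 0| < |v 1|}]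

theorem injective_lift : Function.Injective (FreeGroup.lift ![a, b]) := by
  let V := SubMulAction.nonzero SL(2, ℤ) (Fin 2 → ℤ)
  have hne (v : V) : ¬((v : Fin 2 → ℤ) 0 = 0 ∧ (v : Fin 2 → ℤ) 1 = 0) :=
    fun h => v.2 (funext (Fin.forall_fin_two.mpr h))
  refine FreeGroup.injective_lift_of_ping_pong (α := V) ![a, b]
    (fun i => (↑) ⁻¹' X i) (fun i => (↑) ⁻¹' Y i) ?_ ?_ ?_ ?_ ?_ ?_
  · intro i
    fin_cases i
    · exact ⟨⟨![1, 0], fun h => by simpa using congrFun h 0⟩, by norm_num [X]⟩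
    · exact ⟨⟨![0, 1], fun h => by simpa using congrFun h 1⟩, by norm_num [X]⟩
  · intro i j hij
    fin_cases i <;> fin_cases j <;> first
      | exact absurd rfl hij
      | exact Set.disjoint_left.mpr fun v ⟨_, h⟩ ⟨_, h'⟩ => by linarith
  · intro i j hij
    fin_cases i <;> fin_cases j <;> first
      | exact absurd rfl hij
      | exact Set.disjoint_left.mpr fun v ⟨_, h⟩ ⟨_, h'⟩ => by linarith
  · intro i j
    fin_cases i <;> fin_cases j <;>
      exact Set.disjoint_left.mpr fun v ⟨h, _⟩ ⟨h', _⟩ => by linarith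
  · intro i
    fin_cases i <;> rintro _ ⟨v, hv, rfl⟩
    · simpa [X, a, transvection_smul] using pingPong_a _ _ (hne v) hv
    · simpa [X, b, transvection_smul] using pingPong_b _ _ hv
  · intro i
    fin_cases i <;> rintro _ ⟨v, hv, rfl⟩
    · simpa [Y, a, transvection_smul, transvection_inv, ← sub_eq_add_neg] using
        pingPong_a_inv _ _ (hne v) hv
    · simpa [Y, b, transvection_smul, transvection_inv, ← sub_eq_add_neg] using
        pingPong_b_inv _ _ hv

end Sanov

instance FreeGroup.residuallyFinite_fin_two : Group.ResiduallyFinite (FreeGroup (Fin 2)) :=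
  .of_injective Sanov.injective_lift

theorem FreeGroup.injective_lift_of_surjective_closure {G ι : Type*} [Group G] [Finite ι]
    [Group.ResiduallyFinite (FreeGroup ι)] (f : ι → G)
    {ψ : Subgroup.closure (Set.range f) →* FreeGroup ι} (hψ : Function.Surjective ψ) :
    Function.Injective (FreeGroup.lift f) := by
  let π := (lift f).codRestrict (Subgroup.closure (Set.range f)) fun w =>
    range_lift_eq_closure (f := f) ▸ MonoidHom.mem_range.mpr ⟨w, rfl⟩
  have hπ : Function.Surjective π := by
    rintro ⟨g, hg⟩
    rw [← range_lift_eq_closure] at hg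
    obtain ⟨w, rfl⟩ := hg
    exact ⟨w, rfl⟩
  have hφ := Group.ResiduallyFinite.injective_of_surjective (φ := ψ.comp π) (hψ.comp hπ)
  exact fun v w h => hφ.of_comp (f := ψ) (Subtype.ext h)

theorem Subgroup.commute_of_mulEquiv {G A : Type*} [Group G] [CommGroup A] {H : Subgroup G}
    (e : H ≃* A) {x y : G} (hx : x ∈ H) (hy : y ∈ H) : Commute x y :=
  congrArg Subtype.val (e.injective (by rw [map_mul, map_mul, mul_comm]) :
    (⟨x, hx⟩ * ⟨y, hy⟩ : H) = ⟨y, hy⟩ * ⟨x, hx⟩)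

theorem Subgroup.commute_of_mem_closure {G : Type*} [Group G] {S : Set G}
    (hS : ∀ a ∈ S, ∀ b ∈ S, Commute a b) {x y : G} (hx : x ∈ closure S) (hy : y ∈ closure S) :
    Commute x y :=
  Set.centralizer_centralizer_comm_of_comm hS x (closure_le_centralizer_centralizer S hx) y
    (closure_le_centralizer_centralizer S hy)

def LargenessAlternative (G : Type*) [Group G] : Prop :=
  ∀ S : Finset G,
    (∃ ψ : ↥(Subgroup.closure (S : Set G)) →* FreeGroup (Fin 2), Function.Surjective ψ) ∨
    (∃ n : ℕ, Nonempty (↥(Subgroup.closure (S : Set G)) ≃* Multiplicative (Fin n → ℤ)))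

theorem LargenessAlternative.commute_or_injective_lift {G : Type*} [Group G]
    (hG : LargenessAlternative G) (a b : G) :
    Commute a b ∨ Function.Injective (FreeGroup.lift ![a, b]) := by
  classical
  have hab : Set.range ![a, b] = (({a, b} : Finset G) : Set G) := by
    rw [Matrix.range_cons_cons_empty, Finset.coe_pair]
  rcases hG {a, b} with ⟨ψ, hψ⟩ | ⟨n, ⟨e⟩⟩
  · right
    exact FreeGroup.injective_lift_of_surjective_closure ![a, b]
      (ψ := ψ.comp (MulEquiv.subgroupCongr (congrArg Subgroup.closure hab)).toMonoidHom)
      (hψ.comp (MulEquiv.surjective _))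
  · left
    exact Subgroup.commute_of_mulEquiv e (Subgroup.subset_closure (by simp))
      (Subgroup.subset_closure (by simp))

theorem ShortWord.one_of_mem {G : Type*} [Group G] {S : Set G} {g : G} (hg : g ∈ S) :
    ShortWord S 1 g :=
  ⟨[g], by simpa using Or.inl hg, by simp, by simp⟩

/-- In a group satisfying the largeness alternative (every finitely
generated subgroup surjects onto a nonabelian free group or is free abelian), any
two elements either commute or freely generate a rank-2 free group, and every
finitely generated subgroup is abelian or contains a 1-short free subgroup. -/
theorem largeness_one_short {G : Type*} [Group G]
    (hlarge : ∀ S : Finset G,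
      (∃ ψ : ↥(Subgroup.closure (S : Set G)) →* FreeGroup (Fin 2),
        Function.Surjective ψ) ∨
      (∃ n : ℕ, Nonempty
        (↥(Subgroup.closure (S : Set G)) ≃* Multiplicative (Fin n → ℤ)))) :
    (∀ a b : G, Commute a b ∨
      Function.Injective ⇑(FreeGroup.lift ![a, b] : FreeGroup (Fin 2) →* G)) ∧
    (∀ S : Finset G,
      (∀ x ∈ Subgroup.closure (S : Set G), ∀ y ∈ Subgroup.closure (S : Set G),
        Commute x y) ∨
      (∃ a b : G, ShortWord (S : Set G) 1 a ∧ ShortWord (S : Set G) 1 b ∧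
        Function.Injective ⇑(FreeGroup.lift ![a, b] : FreeGroup (Fin 2) →* G))) := by
  have hpair := LargenessAlternative.commute_or_injective_lift hlarge
  refine ⟨hpair, fun S => ?_⟩
  by_cases hS : ∀ a ∈ (S : Set G), ∀ b ∈ (S : Set G), Commute a b
  · exact .inl fun x hx y hy => Subgroup.commute_of_mem_closure hS hx hy
  · push Not at hS
    obtain ⟨a, ha, b, hb, hab⟩ := hS
    exact .inr ⟨a, b, .one_of_mem ha, .one_of_mem hb, (hpair a b).resolve_left hab⟩
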